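/- arXiv:2411.18219 — 3 statements merged into one kernel-verified Lean document; each statement's English description precedes it below -/
import Mathlib

section
/- Suppose x_{k+1} = A x_k + B u_k, y_k = C x_k + D u_k, with P ≻ 0, γ ∈ (0,1), S symmetric, and suppose the matrix inequality [I 0; A B]ᵀ [γP 0; 0 -P] [I 0; A B] + [C D; 0 I]ᵀ S [C D; 0 I] ⪰ 0 holds. Then for any two trajectories whose input/output differences satisfy [Δy_k; Δu_k]ᵀ S [Δy_k; Δu_k] ≤ 0 for all k, the storage V(Δx) = Δxᵀ P Δx satisfies V(Δx_{k+1}) ≤ γ V(Δx_k) for all k, i.e., the interconnection is exponentially contracting with rate γ. -/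
/-!
Differences of two trajectories again satisfy the state and output equations. Evaluating the
quadratic form of the LMI at `[Δx_k; Δu_k]` therefore gives the dissipation inequality
`V(Δx_{k+1}) ≤ γ V(Δx_k) + [Δy_k; Δu_k]ᵀ S [Δy_k; Δu_k]`, whose supply term the sector
bound makes nonpositive.
-/

open Matrix

section BlockAlgebra

variable {ι κ μ R : Type*} [Fintype ι] [Fintype μ]

theorem dotProduct_transpose_mul_mul_mulVec [Fintype κ] [CommSemiring R] (F : Matrix κ ι R)
    (Q : Matrix κ κ R) (z : ι → R) :
    z ⬝ᵥ (Fᵀ * Q * F) *ᵥ z = F *ᵥ z ⬝ᵥ Q *ᵥ (F *ᵥ z) := by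
  rw [← mulVec_mulVec, ← mulVec_mulVec, dotProduct_mulVec, vecMul_transpose]

theorem sumElim_dotProduct_fromBlocks_diag_mulVec_sumElim [Fintype κ]
    [NonUnitalNonAssocSemiring R]
    (Q : Matrix ι ι R) (W : Matrix κ κ R) (x : ι → R) (y : κ → R) :
    Sum.elim x y ⬝ᵥ fromBlocks Q 0 0 W *ᵥ Sum.elim x y = x ⬝ᵥ Q *ᵥ x + y ⬝ᵥ W *ᵥ y := by
  simp [fromBlocks_mulVec, sumElim_dotProduct_sumElim]

theorem fromBlocks_one_zero_mulVec_sumElim [NonAssocSemiring R] [DecidableEq ι]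
    (A : Matrix κ ι R) (B : Matrix κ μ R) (x : ι → R) (u : μ → R) :
    fromBlocks 1 0 A B *ᵥ Sum.elim x u = Sum.elim x (A *ᵥ x + B *ᵥ u) := by
  simp [fromBlocks_mulVec]

theorem fromBlocks_zero_one_mulVec_sumElim [NonAssocSemiring R] [DecidableEq μ]
    (C : Matrix κ ι R) (D : Matrix κ μ R) (x : ι → R) (u : μ → R) :
    fromBlocks C D 0 1 *ᵥ Sum.elim x u = Sum.elim (C *ᵥ x + D *ᵥ u) u := by
  simp [fromBlocks_mulVec]

theorem mulVec_add_mulVec_sub_mulVec_add_mulVec [NonUnitalNonAssocRing R]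
    (A : Matrix κ ι R) (B : Matrix κ μ R) (x₁ x₂ : ι → R) (u₁ u₂ : μ → R) :
    (A *ᵥ x₁ + B *ᵥ u₁) - (A *ᵥ x₂ + B *ᵥ u₂) = A *ᵥ (x₁ - x₂) + B *ᵥ (u₁ - u₂) := by
  rw [mulVec_sub, mulVec_sub]
  abel

end BlockAlgebra

theorem storage_step_le_of_LMI {ι μ κ : Type*} [Fintype ι] [Fintype μ] [Fintype κ]
    [DecidableEq ι] [DecidableEq μ]
    (A : Matrix ι ι ℝ) (B : Matrix ι μ ℝ) (C : Matrix κ ι ℝ) (D : Matrix κ μ ℝ)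
    (S : Matrix (κ ⊕ μ) (κ ⊕ μ) ℝ) (P : Matrix ι ι ℝ) (γ : ℝ)
    (hLMI : ((fromBlocks (1 : Matrix ι ι ℝ) 0 A B)ᵀ * fromBlocks (γ • P) 0 0 (-P) *
        fromBlocks (1 : Matrix ι ι ℝ) 0 A B +
      (fromBlocks C D 0 (1 : Matrix μ μ ℝ))ᵀ * S * fromBlocks C D 0 (1 : Matrix μ μ ℝ)).PosSemidef)
    (x : ι → ℝ) (u : μ → ℝ) :
    (A *ᵥ x + B *ᵥ u) ⬝ᵥ P *ᵥ (A *ᵥ x + B *ᵥ u) ≤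
      γ * (x ⬝ᵥ P *ᵥ x) +
        Sum.elim (C *ᵥ x + D *ᵥ u) u ⬝ᵥ S *ᵥ Sum.elim (C *ᵥ x + D *ᵥ u) u := by
  have h := hLMI.dotProduct_mulVec_nonneg (Sum.elim x u)
  rw [star_trivial, add_mulVec, dotProduct_add, dotProduct_transpose_mul_mul_mulVec,
    dotProduct_transpose_mul_mul_mulVec, fromBlocks_one_zero_mulVec_sumElim,
    fromBlocks_zero_one_mulVec_sumElim, sumElim_dotProduct_fromBlocks_diag_mulVec_sumElim,
    smul_mulVec, dotProduct_smul, smul_eq_mul, neg_mulVec, dotProduct_neg] at h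
  linarith

theorem LMI_implies_exponential_contraction_general
    (n m p : ℕ) (A : Matrix (Fin n) (Fin n) ℝ) (B : Matrix (Fin n) (Fin m) ℝ)
    (C : Matrix (Fin p) (Fin n) ℝ) (D : Matrix (Fin p) (Fin m) ℝ)
    (S : Matrix (Fin p ⊕ Fin m) (Fin p ⊕ Fin m) ℝ)
    (P : Matrix (Fin n) (Fin n) ℝ)
    (γ : ℝ)
    (hLMI :
      ((Matrix.fromBlocks (1 : Matrix (Fin n) (Fin n) ℝ) 0 A B)ᵀ *
            Matrix.fromBlocks (γ • P) 0 0 (-P) *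
            Matrix.fromBlocks (1 : Matrix (Fin n) (Fin n) ℝ) 0 A B +
          (Matrix.fromBlocks C D 0 (1 : Matrix (Fin m) (Fin m) ℝ))ᵀ * S *
            Matrix.fromBlocks C D 0 (1 : Matrix (Fin m) (Fin m) ℝ)).PosSemidef)
    (x₁ x₂ : ℕ → Fin n → ℝ) (u₁ u₂ : ℕ → Fin m → ℝ) (y₁ y₂ : ℕ → Fin p → ℝ)
    (hx₁ : ∀ k, x₁ (k + 1) = A.mulVec (x₁ k) + B.mulVec (u₁ k))
    (hy₁ : ∀ k, y₁ k = C.mulVec (x₁ k) + D.mulVec (u₁ k))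
    (hx₂ : ∀ k, x₂ (k + 1) = A.mulVec (x₂ k) + B.mulVec (u₂ k))
    (hy₂ : ∀ k, y₂ k = C.mulVec (x₂ k) + D.mulVec (u₂ k))
    (hsec : ∀ k,
      Sum.elim (y₁ k - y₂ k) (u₁ k - u₂ k) ⬝ᵥ
        S.mulVec (Sum.elim (y₁ k - y₂ k) (u₁ k - u₂ k)) ≤ 0) :
    ∀ k,
      (x₁ (k + 1) - x₂ (k + 1)) ⬝ᵥ P.mulVec (x₁ (k + 1) - x₂ (k + 1)) ≤
        γ * ((x₁ k - x₂ k) ⬝ᵥ P.mulVec (x₁ k - x₂ k)) := by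
  intro k
  have hΔx : x₁ (k + 1) - x₂ (k + 1) = A *ᵥ (x₁ k - x₂ k) + B *ᵥ (u₁ k - u₂ k) := by
    rw [hx₁, hx₂, mulVec_add_mulVec_sub_mulVec_add_mulVec]
  have hΔy : y₁ k - y₂ k = C *ᵥ (x₁ k - x₂ k) + D *ᵥ (u₁ k - u₂ k) := by
    rw [hy₁, hy₂, mulVec_add_mulVec_sub_mulVec_add_mulVec]
  have hstep := storage_step_le_of_LMI A B C D S P γ hLMI (x₁ k - x₂ k) (u₁ k - u₂ k)
  rw [← hΔx, ← hΔy] at hstep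
  linarith [hsec k]

/-- If the `γ`-contraction LMI holds, then along any two trajectories whose
input/output increments satisfy the sector bound `[Δy;Δu]ᵀ S [Δy;Δu] ≤ 0`,
the quadratic storage contracts exponentially with rate `γ`. -/
theorem LMI_implies_exponential_contraction
    (n m p : ℕ) (A : Matrix (Fin n) (Fin n) ℝ) (B : Matrix (Fin n) (Fin m) ℝ)
    (C : Matrix (Fin p) (Fin n) ℝ) (D : Matrix (Fin p) (Fin m) ℝ)
    (S : Matrix (Fin p ⊕ Fin m) (Fin p ⊕ Fin m) ℝ) (hS : S.IsSymm)
    (P : Matrix (Fin n) (Fin n) ℝ) (hP : P.PosDef)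
    (γ : ℝ) (hγ0 : 0 < γ) (hγ1 : γ < 1)
    (hLMI :
      ((Matrix.fromBlocks (1 : Matrix (Fin n) (Fin n) ℝ) 0 A B)ᵀ *
            Matrix.fromBlocks (γ • P) 0 0 (-P) *
            Matrix.fromBlocks (1 : Matrix (Fin n) (Fin n) ℝ) 0 A B +
          (Matrix.fromBlocks C D 0 (1 : Matrix (Fin m) (Fin m) ℝ))ᵀ * S *
            Matrix.fromBlocks C D 0 (1 : Matrix (Fin m) (Fin m) ℝ)).PosSemidef)
    (x₁ x₂ : ℕ → Fin n → ℝ) (u₁ u₂ : ℕ → Fin m → ℝ) (y₁ y₂ : ℕ → Fin p → ℝ)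
    (hx₁ : ∀ k, x₁ (k + 1) = A.mulVec (x₁ k) + B.mulVec (u₁ k))
    (hy₁ : ∀ k, y₁ k = C.mulVec (x₁ k) + D.mulVec (u₁ k))
    (hx₂ : ∀ k, x₂ (k + 1) = A.mulVec (x₂ k) + B.mulVec (u₂ k))
    (hy₂ : ∀ k, y₂ k = C.mulVec (x₂ k) + D.mulVec (u₂ k))
    (hsec : ∀ k,
      Sum.elim (y₁ k - y₂ k) (u₁ k - u₂ k) ⬝ᵥ
        S.mulVec (Sum.elim (y₁ k - y₂ k) (u₁ k - u₂ k)) ≤ 0) :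
    ∀ k,
      (x₁ (k + 1) - x₂ (k + 1)) ⬝ᵥ P.mulVec (x₁ (k + 1) - x₂ (k + 1)) ≤
        γ * ((x₁ k - x₂ k) ⬝ᵥ P.mulVec (x₁ k - x₂ k)) :=
  LMI_implies_exponential_contraction_general n m p A B C D S P γ hLMI x₁ x₂ u₁ u₂ y₁ y₂ hx₁ hy₁ hx₂
    hy₂ hsec
end

section
/- Closed-loop nonexpansiveness: let a plant ξ_{k+1} = f(ξ_k, ν_k), ζ_k = g(ξ_k, ν_k) be incrementally dissipative with quadratic supply rate s_p(Δζ, Δν) and nonnegative storage V_p; let the oracle u = ψ(y, d) satisfy [Δy; Δu; Δd]ᵀ S_ψ [Δy; Δu; Δd] ≤ 0; and suppose there exists α > 0 such that the open linear algorithm is incrementally dissipative with nonnegative storage V with respect to α·s_ψ(Δy, Δu, Δd) - s_p(Δd, Δz). Then the autonomous interconnection obtained by setting ζ_k = d_k and ν_k = z_k is nonexpansive with storage V_c(Δξ, Δx) = V_p(Δξ) + V(Δx): V_c(Δξ_{k+1}, Δx_{k+1}) ≤ V_c(Δξ_k, Δx_k) for all k. -/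
open Matrix

/-- Theorem 2 (closed loop): if the plant is incrementally dissipative w.r.t. a
quadratic supply `s_p`, the oracle satisfies the quadratic bound `S_ψ`, and the
open linear algorithm is incrementally dissipative w.r.t.
`α s_ψ(Δy,Δu,Δd) - s_p(Δd,Δz)` with `α > 0`, then the interconnection
(`ζ = d`, `ν = z`) is nonexpansive with storage `V_c = V_p + V`. -/
theorem closed_loop_nonexpansive
    (np n m r p s : ℕ) (α : ℝ) (hα : 0 < α)
    -- plant
    (f : (Fin np → ℝ) → (Fin s → ℝ) → (Fin np → ℝ))
    (g : (Fin np → ℝ) → (Fin s → ℝ) → (Fin r → ℝ))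
    (Sp : Matrix (Fin r ⊕ Fin s) (Fin r ⊕ Fin s) ℝ)
    (Vp : (Fin np → ℝ) → ℝ) (hVp : ∀ v, 0 ≤ Vp v)
    (hplant : ∀ (ξ₁ ξ₂ : ℕ → Fin np → ℝ) (ν₁ ν₂ : ℕ → Fin s → ℝ),
      (∀ k, ξ₁ (k + 1) = f (ξ₁ k) (ν₁ k)) → (∀ k, ξ₂ (k + 1) = f (ξ₂ k) (ν₂ k)) →
      ∀ k, Vp (ξ₁ (k + 1) - ξ₂ (k + 1)) - Vp (ξ₁ k - ξ₂ k) ≤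
        Sum.elim (g (ξ₁ k) (ν₁ k) - g (ξ₂ k) (ν₂ k)) (ν₁ k - ν₂ k) ⬝ᵥ
          Sp.mulVec (Sum.elim (g (ξ₁ k) (ν₁ k) - g (ξ₂ k) (ν₂ k)) (ν₁ k - ν₂ k)))
    -- oracle
    (Sψ : Matrix (Fin p ⊕ (Fin m ⊕ Fin r)) (Fin p ⊕ (Fin m ⊕ Fin r)) ℝ)
    (ψ : (Fin p → ℝ) → (Fin r → ℝ) → (Fin m → ℝ))
    (hψ : ∀ y₁ y₂ d₁ d₂,
      Sum.elim (y₁ - y₂) (Sum.elim (ψ y₁ d₁ - ψ y₂ d₂) (d₁ - d₂)) ⬝ᵥ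
        Sψ.mulVec (Sum.elim (y₁ - y₂) (Sum.elim (ψ y₁ d₁ - ψ y₂ d₂) (d₁ - d₂))) ≤ 0)
    -- open linear algorithm
    (A : Matrix (Fin n) (Fin n) ℝ) (B₁ : Matrix (Fin n) (Fin m) ℝ)
    (B₂ : Matrix (Fin n) (Fin r) ℝ)
    (C₁ : Matrix (Fin p) (Fin n) ℝ) (D₁₁ : Matrix (Fin p) (Fin m) ℝ)
    (D₁₂ : Matrix (Fin p) (Fin r) ℝ)
    (C₂ : Matrix (Fin s) (Fin n) ℝ) (D₂₁ : Matrix (Fin s) (Fin m) ℝ)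
    (D₂₂ : Matrix (Fin s) (Fin r) ℝ)
    (V : (Fin n → ℝ) → ℝ) (hV : ∀ v, 0 ≤ V v)
    (halg : ∀ (x₁ x₂ : ℕ → Fin n → ℝ) (u₁ u₂ : ℕ → Fin m → ℝ)
        (d₁ d₂ : ℕ → Fin r → ℝ) (y₁ y₂ : ℕ → Fin p → ℝ) (z₁ z₂ : ℕ → Fin s → ℝ),
      (∀ k, x₁ (k + 1) = A.mulVec (x₁ k) + B₁.mulVec (u₁ k) + B₂.mulVec (d₁ k)) →
      (∀ k, y₁ k = C₁.mulVec (x₁ k) + D₁₁.mulVec (u₁ k) + D₁₂.mulVec (d₁ k)) →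
      (∀ k, z₁ k = C₂.mulVec (x₁ k) + D₂₁.mulVec (u₁ k) + D₂₂.mulVec (d₁ k)) →
      (∀ k, x₂ (k + 1) = A.mulVec (x₂ k) + B₁.mulVec (u₂ k) + B₂.mulVec (d₂ k)) →
      (∀ k, y₂ k = C₁.mulVec (x₂ k) + D₁₁.mulVec (u₂ k) + D₁₂.mulVec (d₂ k)) →
      (∀ k, z₂ k = C₂.mulVec (x₂ k) + D₂₁.mulVec (u₂ k) + D₂₂.mulVec (d₂ k)) →
      ∀ k, V (x₁ (k + 1) - x₂ (k + 1)) - V (x₁ k - x₂ k) ≤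
        α * (Sum.elim (y₁ k - y₂ k) (Sum.elim (u₁ k - u₂ k) (d₁ k - d₂ k)) ⬝ᵥ
              Sψ.mulVec (Sum.elim (y₁ k - y₂ k) (Sum.elim (u₁ k - u₂ k) (d₁ k - d₂ k)))) -
          Sum.elim (d₁ k - d₂ k) (z₁ k - z₂ k) ⬝ᵥ
            Sp.mulVec (Sum.elim (d₁ k - d₂ k) (z₁ k - z₂ k))) :
    -- closed loop: ζ = d, ν = z, u = ψ(y, d)
    ∀ (ξ₁ ξ₂ : ℕ → Fin np → ℝ) (x₁ x₂ : ℕ → Fin n → ℝ) (u₁ u₂ : ℕ → Fin m → ℝ)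
        (d₁ d₂ : ℕ → Fin r → ℝ) (y₁ y₂ : ℕ → Fin p → ℝ) (z₁ z₂ : ℕ → Fin s → ℝ),
      (∀ k, ξ₁ (k + 1) = f (ξ₁ k) (z₁ k)) → (∀ k, d₁ k = g (ξ₁ k) (z₁ k)) →
      (∀ k, x₁ (k + 1) = A.mulVec (x₁ k) + B₁.mulVec (u₁ k) + B₂.mulVec (d₁ k)) →
      (∀ k, y₁ k = C₁.mulVec (x₁ k) + D₁₁.mulVec (u₁ k) + D₁₂.mulVec (d₁ k)) →
      (∀ k, z₁ k = C₂.mulVec (x₁ k) + D₂₁.mulVec (u₁ k) + D₂₂.mulVec (d₁ k)) →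
      (∀ k, u₁ k = ψ (y₁ k) (d₁ k)) →
      (∀ k, ξ₂ (k + 1) = f (ξ₂ k) (z₂ k)) → (∀ k, d₂ k = g (ξ₂ k) (z₂ k)) →
      (∀ k, x₂ (k + 1) = A.mulVec (x₂ k) + B₁.mulVec (u₂ k) + B₂.mulVec (d₂ k)) →
      (∀ k, y₂ k = C₁.mulVec (x₂ k) + D₁₁.mulVec (u₂ k) + D₁₂.mulVec (d₂ k)) →
      (∀ k, z₂ k = C₂.mulVec (x₂ k) + D₂₁.mulVec (u₂ k) + D₂₂.mulVec (d₂ k)) →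
      (∀ k, u₂ k = ψ (y₂ k) (d₂ k)) →
      ∀ k,
        Vp (ξ₁ (k + 1) - ξ₂ (k + 1)) + V (x₁ (k + 1) - x₂ (k + 1)) ≤
          Vp (ξ₁ k - ξ₂ k) + V (x₁ k - x₂ k) := by
  intro ξ₁ ξ₂ x₁ x₂ u₁ u₂ d₁ d₂ y₁ y₂ z₁ z₂
  intro hξ₁ hd₁ hx₁ hy₁ hz₁ hu₁ hξ₂ hd₂ hx₂ hy₂ hz₂ hu₂ k
  have hp := hplant ξ₁ ξ₂ z₁ z₂ hξ₁ hξ₂ k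
  rw [← hd₁ k, ← hd₂ k] at hp
  have ha := halg x₁ x₂ u₁ u₂ d₁ d₂ y₁ y₂ z₁ z₂ hx₁ hy₁ hz₁ hx₂ hy₂ hz₂ k
  have ho := hψ (y₁ k) (y₂ k) (d₁ k) (d₂ k)
  rw [← hu₁ k, ← hu₂ k] at ho
  nlinarith [mul_nonpos_of_nonneg_of_nonpos (le_of_lt hα) ho]
end

section
/- For the scalar closed loop x_{k+1} = -x_k + u_k, u_{k+1} = (1-η)u_k + η K x_k, the 2×2 system matrix [[-1, 1],[ηK, 1-η]] is not Schur stable (has an eigenvalue of modulus ≥ 1) for every pair (K, η) with 0 < K < 2 and 0 < η < 2. -/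
open Matrix Polynomial

/-!
The characteristic polynomial of the closed-loop matrix is `λ² + ηλ + (η - 1 - ηK)`, whose value
at `-1` is `-ηK < 0`. A real monic quadratic that is nonpositive at `-1` has a real root `≤ -1`,
and this root is the eigenvalue of modulus at least `1`.
-/

/-- The witness is the smaller root `(-b - √(b² - 4c)) / 2`; the hypothesis gives
`b² - 4c ≥ (b - 2)²`. -/
theorem exists_quadratic_root_le_neg_one {b c : ℝ} (h : 1 - b + c ≤ 0) :
    ∃ r ≤ -1, r ^ 2 + b * r + c = 0 := by
  have hdisc : (b - 2) ^ 2 ≤ b ^ 2 - 4 * c := by linarith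
  have hsq : Real.sqrt (b ^ 2 - 4 * c) ^ 2 = b ^ 2 - 4 * c :=
    Real.sq_sqrt ((sq_nonneg _).trans hdisc)
  have hge : 2 - b ≤ Real.sqrt (b ^ 2 - 4 * c) :=
    calc 2 - b ≤ |b - 2| := by rw [abs_sub_comm]; exact le_abs_self _
      _ = Real.sqrt ((b - 2) ^ 2) := (Real.sqrt_sq_eq_abs _).symm
      _ ≤ Real.sqrt (b ^ 2 - 4 * c) := Real.sqrt_le_sqrt hdisc
  refine ⟨(-b - Real.sqrt (b ^ 2 - 4 * c)) / 2, by linarith, ?_⟩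
  linear_combination hsq / 4

theorem Matrix.exists_isRoot_charpoly_le_neg_one (A : Matrix (Fin 2) (Fin 2) ℝ)
    (h : A.charpoly.eval (-1) ≤ 0) : ∃ r ≤ -1, A.charpoly.IsRoot r := by
  rw [charpoly_fin_two] at h ⊢
  simp only [eval_add, eval_sub, eval_mul, eval_pow, eval_C, eval_X] at h
  obtain ⟨r, hr, hroot⟩ := exists_quadratic_root_le_neg_one (b := -A.trace) (c := A.det)
    (by linarith)
  refine ⟨r, hr, ?_⟩
  simp only [IsRoot, eval_add, eval_sub, eval_mul, eval_pow, eval_C, eval_X]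
  linear_combination hroot

theorem charpoly_closed_loop_eval_neg_one (K η : ℝ) :
    (!![-1, 1; η * K, 1 - η] : Matrix (Fin 2) (Fin 2) ℝ).charpoly.eval (-1) = -(η * K) := by
  rw [charpoly_fin_two, trace_fin_two_of, det_fin_two_of]
  simp only [eval_add, eval_sub, eval_mul, eval_pow, eval_C, eval_X]
  ring

theorem closed_loop_not_Schur_stable_general
    (K η : ℝ) (hK0 : 0 < K) (hη0 : 0 < η) :
    ∃ z : ℂ, 1 ≤ ‖z‖ ∧
      (((!![-1, 1; η * K, 1 - η] : Matrix (Fin 2) (Fin 2) ℝ).map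
          (Complex.ofReal)).charpoly).IsRoot z := by
  obtain ⟨r, hr, hroot⟩ := Matrix.exists_isRoot_charpoly_le_neg_one _
    ((charpoly_closed_loop_eval_neg_one K η).trans_le (neg_nonpos.mpr (mul_pos hη0 hK0).le))
  refine ⟨r, ?_, ?_⟩
  · rw [Complex.norm_real, Real.norm_eq_abs]
    exact (le_neg.mpr hr).trans (neg_le_abs r)
  · rw [show (Complex.ofReal : ℝ → ℂ) = Complex.ofRealHom from rfl, charpoly_map]
    exact hroot.map

/-- For every `0 < K < 2` and `0 < η < 2`, the closed-loop matrix
`[[-1, 1],[ηK, 1-η]]` is not Schur stable: it has an eigenvalue (a root of its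
characteristic polynomial over `ℂ`) of modulus at least `1`. -/
theorem closed_loop_not_Schur_stable
    (K η : ℝ) (hK0 : 0 < K) (hK2 : K < 2) (hη0 : 0 < η) (hη2 : η < 2) :
    ∃ z : ℂ, 1 ≤ ‖z‖ ∧
      (((!![-1, 1; η * K, 1 - η] : Matrix (Fin 2) (Fin 2) ℝ).map
          (Complex.ofReal)).charpoly).IsRoot z :=
  closed_loop_not_Schur_stable_general K η hK0 hη0
end
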